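/- For every n, D ∈ ℕ there exists c > 0 such that: for every non-negative real polynomial q in n variables of degree ≤ D and every cube Q ⊆ ℝ^n, there exists a cube Q' ⊆ Q with side length c·ℓ_Q such that sup_{Q'} q ≤ 2 inf_{Q'} q. -/

import Mathlib

/-- The closed axis-parallel cube of lower corner `a` and side `ℓ` in `ℝ^n`. -/
def cube {n : ℕ} (a : Fin n → ℝ) (ℓ : ℝ) : Set (Fin n → ℝ) :=
  Set.Icc a (a + fun _ => ℓ)

/-!
An affine substitution maps the cube onto `[0,1]^n` without raising the degree, so it suffices
to treat the unit cube, uniformly over a finite-dimensional space of polynomials. A nonzero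
polynomial that is non-negative on `[0,1]^n` is positive at some interior point `x₀`, since it
cannot vanish on an open set. By joint continuity of `(coefficients, x) ↦ p(x)`, the ratio
`p(x) / p(y)` stays below `2` for `x, y` in a small cube at `x₀`, for all polynomials with nearby
coefficients. Compactness of the normalized non-negative polynomials makes the side uniform.
-/

open MvPolynomial Set Filter Topology

theorem IsCompact.exists_pos_forall_of_eventually {X : Type*} [TopologicalSpace X]
    {K : Set X} (hK : IsCompact K) {P : ℝ → X → Prop} (hP : Antitone P)
    (hloc : ∀ x ∈ K, ∃ δ > 0, ∀ᶠ y in 𝓝 x, P δ y) : ∃ δ > 0, ∀ x ∈ K, P δ x := by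
  refine hK.induction_on (p := fun s => ∃ δ > 0, ∀ x ∈ s, P δ x)
    ⟨1, one_pos, fun _ h => h.elim⟩
    (fun s t hst ⟨δ, hδ, h⟩ => ⟨δ, hδ, fun x hx => h x (hst hx)⟩) ?_ ?_
  · rintro s t ⟨δ, hδ, hs⟩ ⟨δ', hδ', ht⟩
    refine ⟨min δ δ', lt_min hδ hδ', ?_⟩
    rintro x (hx | hx)
    · exact hP (min_le_left _ _) x (hs x hx)
    · exact hP (min_le_right _ _) x (ht x hx)
  · intro x hx
    obtain ⟨δ, hδ, h⟩ := hloc x hx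
    exact ⟨{y | P δ y}, mem_nhdsWithin_of_mem_nhds h, δ, hδ, fun y hy => hy⟩

theorem exists_mem_nhds_eventually_forall_le_mul {P E : Type*} [TopologicalSpace P]
    [TopologicalSpace E] {F : P → E → ℝ} (hF : Continuous (Function.uncurry F)) {v : P}
    {x₀ : E} (hpos : 0 < F v x₀) {Λ : ℝ} (hΛ : 1 < Λ) :
    ∃ W ∈ 𝓝 x₀, ∀ᶠ w in 𝓝 v, ∀ x ∈ W, ∀ y ∈ W, F w x ≤ Λ * F w y := by
  obtain ⟨s, hs, hs'⟩ := exists_between (div_lt_self hpos hΛ)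
  have hΛs : F v x₀ < Λ * s := by rwa [div_lt_iff₀' (by linarith)] at hs
  have hmem := (hF.continuousAt (x := (v, x₀))).preimage_mem_nhds (Ioo_mem_nhds hs' hΛs)
  rw [nhds_prod_eq, mem_prod_iff] at hmem
  obtain ⟨U, hU, W, hW, hUW⟩ := hmem
  refine ⟨W, hW, Filter.mem_of_superset hU fun w hw x hx y hy => ?_⟩
  have hx' := (hUW (mk_mem_prod hw hx)).2
  have hy' := (hUW (mk_mem_prod hw hy)).1
  simp only [Function.uncurry_apply_pair] at hx' hy'
  exact hx'.le.trans (mul_le_mul_of_nonneg_left hy'.le (by linarith))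

theorem MvPolynomial.totalDegree_aeval_le {σ τ R : Type*} [CommSemiring R]
    {g : σ → MvPolynomial τ R} {k : ℕ} (hg : ∀ i, (g i).totalDegree ≤ k)
    (p : MvPolynomial σ R) : (aeval g p).totalDegree ≤ k * p.totalDegree := by
  conv_lhs => rw [p.as_sum]
  rw [map_sum]
  refine totalDegree_finsetSum_le fun s hs => ?_
  rw [aeval_monomial, Finsupp.prod]
  calc _ ≤ (algebraMap R (MvPolynomial τ R) (p.coeff s)).totalDegree
          + (∏ i ∈ s.support, g i ^ s i).totalDegree := totalDegree_mul _ _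
    _ ≤ 0 + ∑ i ∈ s.support, s i * k := by
        gcongr
        · rw [algebraMap_eq, totalDegree_C]
        · exact (totalDegree_finsetProd _ _).trans <| Finset.sum_le_sum fun i _ =>
            (totalDegree_pow _ _).trans (Nat.mul_le_mul_left _ (hg i))
    _ = k * s.sum fun _ e => e := by rw [zero_add, ← Finset.sum_mul, mul_comm]; rfl
    _ ≤ k * p.totalDegree := Nat.mul_le_mul_left _ (le_totalDegree hs)

theorem MvPolynomial.eq_zero_of_forall_eval_eq_zero_of_isOpen {σ : Type*} [Fintype σ]
    {p : MvPolynomial σ ℝ} {U : Set (σ → ℝ)} (hU : IsOpen U) (hne : U.Nonempty)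
    (h : ∀ x ∈ U, eval x p = 0) : p = 0 := by
  obtain ⟨x₀, hx₀⟩ := hne
  have hzero := (AnalyticOnNhd.eval_mvPolynomial p).eqOn_zero_of_preconnected_of_eventuallyEq_zero
    isPreconnected_univ (mem_univ x₀) (Filter.eventuallyEq_of_mem (hU.mem_nhds hx₀) h)
  exact MvPolynomial.funext fun x => by simpa using hzero (mem_univ x)

section Cube

variable {n : ℕ}

lemma mem_cube_iff {a x : Fin n → ℝ} {ℓ : ℝ} :
    x ∈ cube a ℓ ↔ ∀ i, a i ≤ x i ∧ x i ≤ a i + ℓ := by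
  simp only [cube, Set.mem_Icc, Pi.le_def, Pi.add_apply, ← forall_and]

lemma cube_subset_cube {a : Fin n → ℝ} {s ℓ : ℝ} (h : s ≤ ℓ) : cube a s ⊆ cube a ℓ :=
  Icc_subset_Icc le_rfl fun _ => add_le_add_right h _

lemma interior_cube_nonempty {a : Fin n → ℝ} {ℓ : ℝ} (hℓ : 0 < ℓ) :
    (interior (cube a ℓ)).Nonempty := by
  rw [cube, ← Set.pi_univ_Icc, interior_pi_set finite_univ]
  exact ⟨fun i => a i + ℓ / 2, fun i _ => by
    simp only [interior_Icc, mem_Ioo, Pi.add_apply]; constructor <;> linarith⟩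

lemma exists_cube_subset_of_mem_nhds {s : Set (Fin n → ℝ)} {x : Fin n → ℝ} (hs : s ∈ 𝓝 x) :
    ∃ δ > 0, cube x δ ⊆ s := by
  obtain ⟨ε, hε, hball⟩ := Metric.mem_nhds_iff.1 hs
  refine ⟨ε / 2, half_pos hε, fun y hy => hball ?_⟩
  rw [Metric.mem_ball]
  refine lt_of_le_of_lt ((dist_pi_le_iff (half_pos hε).le).2 fun i => ?_) (half_lt_self hε)
  obtain ⟨h1, h2⟩ := mem_cube_iff.1 hy i
  rw [Real.dist_eq, abs_le]
  constructor <;> linarith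

lemma mem_cube_smul_add_iff {a b y : Fin n → ℝ} {ℓ s : ℝ} (hℓ : 0 < ℓ) :
    y ∈ cube (a + ℓ • b) (s * ℓ) ↔ ℓ⁻¹ • (y - a) ∈ cube b s := by
  simp only [mem_cube_iff, Pi.add_apply, Pi.smul_apply, Pi.sub_apply, smul_eq_mul]
  refine forall_congr' fun i => and_congr ?_ ?_
  · rw [le_inv_mul_iff₀ hℓ]; constructor <;> intro <;> linarith
  · rw [inv_mul_le_iff₀ hℓ]; constructor <;> intro <;> linarith

/-- `sup_{Q'} f ≤ Λ inf_{Q'} f` on some sub-cube `Q'` of side `s` of `Q = cube a ℓ`. -/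
def HasFlatSubcube (f : (Fin n → ℝ) → ℝ) (Λ : ℝ) (a : Fin n → ℝ) (ℓ s : ℝ) : Prop :=
  ∃ b, cube b s ⊆ cube a ℓ ∧ ∀ x ∈ cube b s, ∀ y ∈ cube b s, f x ≤ Λ * f y

namespace HasFlatSubcube

variable {f : (Fin n → ℝ) → ℝ} {Λ : ℝ} {a : Fin n → ℝ} {ℓ s : ℝ}

lemma antitone : Antitone (HasFlatSubcube f Λ a ℓ) := fun _ _ hst ⟨b, hsub, hflat⟩ =>
  ⟨b, (cube_subset_cube hst).trans hsub,
    fun x hx y hy => hflat x (cube_subset_cube hst hx) y (cube_subset_cube hst hy)⟩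

lemma of_eqOn_zero (hf : ∀ x ∈ cube a ℓ, f x = 0) (hs : s ≤ ℓ) : HasFlatSubcube f Λ a ℓ s :=
  ⟨a, cube_subset_cube hs, fun x hx y hy => by
    rw [hf x (cube_subset_cube hs hx), hf y (cube_subset_cube hs hy), mul_zero]⟩

lemma const_mul (h : HasFlatSubcube f Λ a ℓ s) {r : ℝ} (hr : 0 ≤ r) :
    HasFlatSubcube (fun x => r * f x) Λ a ℓ s :=
  let ⟨b, hsub, hflat⟩ := h
  ⟨b, hsub, fun x hx y hy => by
    rw [mul_left_comm]; exact mul_le_mul_of_nonneg_left (hflat x hx y hy) hr⟩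

lemma of_comp_smul_add (h : HasFlatSubcube (fun x => f (a + ℓ • x)) Λ 0 1 s) (hℓ : 0 < ℓ) :
    HasFlatSubcube f Λ a ℓ (s * ℓ) := by
  obtain ⟨b, hsub, hflat⟩ := h
  have hinv (y : Fin n → ℝ) : a + ℓ • (ℓ⁻¹ • (y - a)) = y := by
    rw [smul_inv_smul₀ hℓ.ne', add_sub_cancel]
  refine ⟨a + ℓ • b, fun y hy => ?_, fun x hx y hy => ?_⟩
  · have := hsub ((mem_cube_smul_add_iff hℓ).1 hy)
    rwa [← mem_cube_smul_add_iff hℓ, smul_zero, add_zero, one_mul] at this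
  · simpa only [hinv] using
      hflat _ ((mem_cube_smul_add_iff hℓ).1 hx) _ ((mem_cube_smul_add_iff hℓ).1 hy)

end HasFlatSubcube

lemma eventually_hasFlatSubcube {P : Type*} [TopologicalSpace P] {F : P → (Fin n → ℝ) → ℝ}
    (hF : Continuous (Function.uncurry F)) {v : P}
    (hv : ∃ x ∈ interior (cube 0 1), 0 < F v x) {Λ : ℝ} (hΛ : 1 < Λ) :
    ∃ δ > 0, ∀ᶠ w in 𝓝 v, HasFlatSubcube (F w) Λ 0 1 δ := by
  obtain ⟨x₀, hx₀, hpos⟩ := hv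
  obtain ⟨W, hW, hev⟩ := exists_mem_nhds_eventually_forall_le_mul hF hpos hΛ
  obtain ⟨δ, hδ, hsub⟩ :=
    exists_cube_subset_of_mem_nhds (inter_mem hW (isOpen_interior.mem_nhds hx₀))
  exact ⟨δ, hδ, hev.mono fun w hw => ⟨x₀, hsub.trans (inter_subset_right.trans interior_subset),
    fun x hx y hy => hw x (hsub hx).1 y (hsub hy).1⟩⟩

theorem exists_hasFlatSubcube_of_linearIndependent {ι : Type*} [Fintype ι]
    {p : ι → MvPolynomial (Fin n) ℝ} (hp : LinearIndependent ℝ p) {Λ : ℝ} (hΛ : 1 < Λ) :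
    ∃ c > 0, ∀ v : ι → ℝ, (∀ x ∈ cube 0 1, 0 ≤ eval x (∑ i, v i • p i)) →
      HasFlatSubcube (fun x => eval x (∑ i, v i • p i)) Λ 0 1 c := by
  set F : (ι → ℝ) → (Fin n → ℝ) → ℝ := fun v x => eval x (∑ i, v i • p i) with hFdef
  have hF : Continuous (Function.uncurry F) := by
    simp only [hFdef, map_sum, smul_eval]
    exact continuous_finsetSum _ fun i _ => ((continuous_apply i).comp continuous_fst).mul
      ((continuous_eval _).comp continuous_snd)
  have hF_smul (r : ℝ) (v : ι → ℝ) (x) : F (r • v) x = r * F v x := by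
    simp only [hFdef, Pi.smul_apply, smul_eq_mul, ← smul_smul, ← Finset.smul_sum, smul_eval]
  set K := Metric.sphere (0 : ι → ℝ) 1 ∩ {v | ∀ x ∈ cube 0 1, 0 ≤ F v x}
  have hK : IsCompact K := (isCompact_sphere 0 1).inter_right <| by
    simp only [ofPred_forall]
    exact isClosed_biInter fun x _ =>
      isClosed_le continuous_const (hF.comp (Continuous.prodMk_left x) :)
  have hloc (v) (hv : v ∈ K) : ∃ δ > 0, ∀ᶠ w in 𝓝 v, HasFlatSubcube (F w) Λ 0 1 δ := by
    refine eventually_hasFlatSubcube hF ?_ hΛ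
    by_contra! hle
    have h0 : ∑ i, v i • p i = 0 :=
      eq_zero_of_forall_eval_eq_zero_of_isOpen isOpen_interior (interior_cube_nonempty one_pos)
        fun x hx => (hle x hx).antisymm (hv.2 x (interior_subset hx))
    have hv1 := mem_sphere_zero_iff_norm.1 hv.1
    rw [show v = 0 from funext (Fintype.linearIndependent_iff.1 hp v h0), norm_zero] at hv1
    exact zero_ne_one hv1
  obtain ⟨c, hc, hcK⟩ := hK.exists_pos_forall_of_eventually
    (P := fun δ w => HasFlatSubcube (F w) Λ 0 1 δ) (fun _ _ h w => HasFlatSubcube.antitone h) hloc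
  refine ⟨min c 1, lt_min hc one_pos, fun v hv => ?_⟩
  rcases eq_or_ne v 0 with rfl | hv0
  · exact HasFlatSubcube.of_eqOn_zero (fun x _ => by simp) (min_le_right _ _)
  have hnorm : 0 < ‖v‖ := norm_pos_iff.2 hv0
  have hu : ‖v‖⁻¹ • v ∈ K := ⟨by simp [norm_smul, hnorm.ne'], fun x hx => by
    rw [hF_smul]; exact mul_nonneg (inv_nonneg.2 hnorm.le) (hv x hx)⟩
  have hscale : (fun x => ‖v‖ * F (‖v‖⁻¹ • v) x) = F v := by
    funext x; rw [hF_smul, mul_inv_cancel_left₀ hnorm.ne']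
  have hflat := (hcK _ hu).const_mul hnorm.le
  rw [hscale] at hflat
  exact HasFlatSubcube.antitone (min_le_left _ _) hflat

theorem exists_hasFlatSubcube_of_finiteDimensional (V : Submodule ℝ (MvPolynomial (Fin n) ℝ))
    [FiniteDimensional ℝ V] {Λ : ℝ} (hΛ : 1 < Λ) :
    ∃ c > 0, ∀ p ∈ V, (∀ x ∈ cube 0 1, 0 ≤ eval x p) → HasFlatSubcube (eval · p) Λ 0 1 c := by
  set B := Module.finBasis ℝ V
  obtain ⟨c, hc, hflat⟩ := exists_hasFlatSubcube_of_linearIndependent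
    (B.linearIndependent.map' V.subtype V.ker_subtype) hΛ
  refine ⟨c, hc, fun p hp hnonneg => ?_⟩
  have hsum : ∑ i, B.repr ⟨p, hp⟩ i • (V.subtype ∘ B) i = p := by
    simpa only [map_sum, map_smul, Submodule.subtype_apply, Function.comp_apply]
      using congrArg V.subtype (B.sum_repr ⟨p, hp⟩)
  rw [← hsum] at hnonneg ⊢
  exact hflat _ hnonneg

end Cube

/-- For every `n, D` there is `c > 0` such that every non-negative real polynomial in `n`
variables of degree `≤ D` satisfies `sup_{Q'} q ≤ 2 inf_{Q'} q` on some sub-cube `Q'` of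
relative side `c` inside every cube `Q`. -/
theorem stmt12 (n D : ℕ) :
    ∃ c > (0 : ℝ), ∀ q : MvPolynomial (Fin n) ℝ,
      (∀ x : Fin n → ℝ, 0 ≤ MvPolynomial.eval x q) → q.totalDegree ≤ D →
      ∀ (a : Fin n → ℝ) (ℓ : ℝ), 0 < ℓ →
        ∃ a' : Fin n → ℝ, cube a' (c * ℓ) ⊆ cube a ℓ ∧
          ∀ x ∈ cube a' (c * ℓ), ∀ y ∈ cube a' (c * ℓ),
            MvPolynomial.eval x q ≤ 2 * MvPolynomial.eval y q := by
  obtain ⟨c, hc, hflat⟩ :=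
    exists_hasFlatSubcube_of_finiteDimensional (restrictTotalDegree (Fin n) ℝ D) one_lt_two
  refine ⟨c, hc, fun q hq hdeg a ℓ hℓ => ?_⟩
  set g : Fin n → MvPolynomial (Fin n) ℝ := fun i => C (a i) + C ℓ * X i
  have hg_deg (i : Fin n) : (g i).totalDegree ≤ 1 :=
    (totalDegree_add _ _).trans <| max_le (by simp) <|
      (totalDegree_mul _ _).trans (by simp [totalDegree_X])
  have hg_eval (x : Fin n → ℝ) : eval x (aeval g q) = eval (a + ℓ • x) q := by
    rw [aeval_def, algebraMap_eq, ← eval_assoc]; congr 2; funext i; simp [g]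
  have hmem : aeval g q ∈ restrictTotalDegree (Fin n) ℝ D :=
    (mem_restrictTotalDegree _ _ _).2 <|
      (totalDegree_aeval_le hg_deg q).trans (by simpa using hdeg)
  have hflat_q := hflat _ hmem fun x _ => hg_eval x ▸ hq _
  simp only [hg_eval] at hflat_q
  exact hflat_q.of_comp_smul_add hℓ
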